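/- Let weighted fundamental graph data with a set S be given and let Q : V* → ℝ be a potential. For θ ∈ ℝ^d let M(θ) be the ν×ν Hermitian matrix acting on f : V* → ℂ by (M(θ)f)(v) = κ̃_v f(v) − Σ_{e : o(e)=v} (m_A(e)/√(m_V(v) m_V(t(e)))) exp(iΦ(e,θ)) f(t(e)), where κ̃_v = (1/m_V(v)) Σ_{e : o(e)=v} m_A(e) (M(θ) is similar, via the positive diagonal matrix diag(√m_V), to the weighted fiber magnetic Laplacian). Let λ_1(θ) ≤ … ≤ λ_ν(θ) be the eigenvalues of M(θ) + diag(Q) and σ_n = [inf_θ λ_n(θ), sup_θ λ_n(θ)] the spectral bands. Then Σ_{n=1}^ν |σ_n| ≤ 2β̂, where β̂ = Σ_{e ∈ S∪S̄} m_A(e)/√(m_V(o(e)) m_V(t(e))); consequently the Lebesgue measure of ⋃_n σ_n (the spectrum of the weighted magnetic Schrödinger operator) is at most 2β̂. -/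

import Mathlib

/-!
Write `M(θ) + diag Q = A₀ - B(θ)`, where `B(θ)` is the hopping matrix of the edges of `S ∪ S̄`
(the only edges whose phase depends on `θ`) and `A₀` is independent of `θ`. By AM-GM and the
symmetry `e ↔ ē`, `-D ≤ B(θ) ≤ D` as quadratic forms, `D` being the diagonal matrix of
`S ∪ S̄`-degrees. Weyl's monotonicity principle then traps `λ_n(θ)` in
`[λ_n(A₀ - D), λ_n(A₀ + D)]`, and these intervals have total length `tr (2 D) = 2 β̂`.
-/

open scoped BigOperators
open Matrix Polynomial

noncomputable section

/-- Phase `Φ(e,θ) = α(e) + ⟨τ(e), θ⟩` of an edge. -/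
def edgePhase {E : Type*} {d : ℕ} (α : E → ℝ) (τ : E → Fin d → ℤ)
    (θ : Fin d → ℝ) (e : E) : ℝ :=
  α e + ∑ j, (τ e j : ℝ) * θ j

/-- Weighted degree `κ̃_v = (1/m_V(v)) ∑_{e : o e = v} m_A(e)`. -/
def wDeg {E : Type*} [Fintype E] {ν : ℕ} (o : E → Fin ν)
    (mV : Fin ν → ℝ) (mA : E → ℝ) (v : Fin ν) : ℝ :=
  (mV v)⁻¹ * ∑ e ∈ Finset.univ.filter (fun e => o e = v), mA e

/-- The symmetrized weighted fiber magnetic Laplacian: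
`(M(θ)f)(v) = κ̃_v f(v) − ∑_{e : o e = v} (m_A(e)/√(m_V(v) m_V(t e))) exp(iΦ(e,θ)) f(t e)`. -/
def wFiberLap {E : Type*} [Fintype E] {d ν : ℕ} (o t : E → Fin ν)
    (τ : E → Fin d → ℤ) (α : E → ℝ) (mV : Fin ν → ℝ) (mA : E → ℝ)
    (θ : Fin d → ℝ) : Matrix (Fin ν) (Fin ν) ℂ :=
  fun v u => (wDeg o mV mA v : ℂ) * (if v = u then 1 else 0)
    - ∑ e ∈ Finset.univ.filter (fun e => o e = v ∧ t e = u),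
        ((mA e / Real.sqrt (mV v * mV u) : ℝ) : ℂ)
          * Complex.exp (Complex.I * (edgePhase α τ θ e : ℝ))

open scoped InnerProductSpace

section Comparison

variable {𝕜 E : Type*} [RCLike 𝕜] [NormedAddCommGroup E] [InnerProductSpace 𝕜 E]

theorem OrthonormalBasis.re_inner_apply_self_eq_sum {ι : Type*} [Fintype ι]
    (b : OrthonormalBasis ι 𝕜 E) {T : E →ₗ[𝕜] E} {f : ι → ℝ}
    (hT : ∀ i, T (b i) = (f i : 𝕜) • b i) (x : E) :
    RCLike.re ⟪x, T x⟫_𝕜 = ∑ i, f i * ‖⟪b i, x⟫_𝕜‖ ^ 2 := by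
  have hTx : T x = ∑ i, (⟪b i, x⟫_𝕜 * f i) • b i := by
    conv_lhs => rw [← b.sum_repr' x]
    simp only [map_sum, map_smul, hT, smul_smul]
  rw [hTx, inner_sum, map_sum]
  refine Finset.sum_congr rfl fun i _ => ?_
  rw [inner_smul_right, ← inner_conj_symm x (b i), mul_right_comm, RCLike.mul_conj,
    mul_comm]
  norm_cast

variable {ν : ℕ} {T : E →ₗ[𝕜] E} {f : Fin ν → ℝ}

theorem OrthonormalBasis.mul_norm_sq_le_re_inner_apply_self (b : OrthonormalBasis (Fin ν) 𝕜 E)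
    (hT : ∀ i, T (b i) = (f i : 𝕜) • b i) (hf : Monotone f) {n : Fin ν} {x : E}
    (hx : ∀ i < n, ⟪b i, x⟫_𝕜 = 0) :
    f n * ‖x‖ ^ 2 ≤ RCLike.re ⟪x, T x⟫_𝕜 := by
  rw [b.re_inner_apply_self_eq_sum hT, ← b.sum_sq_norm_inner_right, Finset.mul_sum]
  refine Finset.sum_le_sum fun i _ => ?_
  rcases lt_or_ge i n with hi | hi
  · simp [hx i hi]
  · exact mul_le_mul_of_nonneg_right (hf hi) (by positivity)

theorem OrthonormalBasis.re_inner_apply_self_le_mul_norm_sq (b : OrthonormalBasis (Fin ν) 𝕜 E)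
    (hT : ∀ i, T (b i) = (f i : 𝕜) • b i) (hf : Monotone f) {n : Fin ν} {x : E}
    (hx : ∀ i, n < i → ⟪b i, x⟫_𝕜 = 0) :
    RCLike.re ⟪x, T x⟫_𝕜 ≤ f n * ‖x‖ ^ 2 := by
  rw [b.re_inner_apply_self_eq_sum hT, ← b.sum_sq_norm_inner_right, Finset.mul_sum]
  refine Finset.sum_le_sum fun i _ => ?_
  rcases lt_or_ge n i with hi | hi
  · simp [hx i hi]
  · exact mul_le_mul_of_nonneg_right (hf hi) (by positivity)

theorem OrthonormalBasis.exists_ne_zero_orthogonal (b b' : OrthonormalBasis (Fin ν) 𝕜 E)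
    (n : Fin ν) :
    ∃ x ≠ 0, (∀ i < n, ⟪b i, x⟫_𝕜 = 0) ∧ ∀ i, n < i → ⟪b' i, x⟫_𝕜 = 0 := by
  classical
  set K := Submodule.span 𝕜
    (↑((Finset.Iio n).image b ∪ (Finset.Ioi n).image b') : Set E)
  have hK : Module.finrank 𝕜 K < Module.finrank 𝕜 E := calc
    Module.finrank 𝕜 K ≤ ((Finset.Iio n).image b ∪ (Finset.Ioi n).image b').card :=
      finrank_span_finset_le_card _
    _ ≤ (Finset.Iio n).card + (Finset.Ioi n).card :=
      (Finset.card_union_le _ _).trans (add_le_add Finset.card_image_le Finset.card_image_le)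
    _ < Module.finrank 𝕜 E := by
      rw [Fin.card_Iio, Fin.card_Ioi, Module.finrank_eq_card_basis b.toBasis, Fintype.card_fin]
      omega
  obtain ⟨x, hx, hx0⟩ := Submodule.exists_mem_ne_zero_of_ne_bot
    (K.orthogonal_eq_bot_iff.not.mpr fun hK_top => hK.ne (by rw [hK_top, finrank_top]))
  refine ⟨x, hx0, fun i hi => ?_, fun i hi => ?_⟩ <;>
    refine Submodule.inner_right_of_mem_orthogonal (Submodule.subset_span ?_) hx <;>
    simp only [Finset.coe_union, Finset.coe_image, Set.mem_union, Set.mem_image,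
      Finset.mem_coe, Finset.mem_Iio, Finset.mem_Ioi]
  exacts [Or.inl ⟨i, hi, rfl⟩, Or.inr ⟨i, hi, rfl⟩]

/-- Weyl's monotonicity principle. -/
theorem OrthonormalBasis.le_of_re_inner_apply_self_le {T' : E →ₗ[𝕜] E} {g : Fin ν → ℝ}
    (b b' : OrthonormalBasis (Fin ν) 𝕜 E)
    (hT : ∀ i, T (b i) = (f i : 𝕜) • b i) (hT' : ∀ i, T' (b' i) = (g i : 𝕜) • b' i)
    (hf : Monotone f) (hg : Monotone g)
    (hle : ∀ x, RCLike.re ⟪x, T x⟫_𝕜 ≤ RCLike.re ⟪x, T' x⟫_𝕜) (n : Fin ν) : f n ≤ g n := by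
  obtain ⟨x, hx0, hxb, hxb'⟩ := b.exists_ne_zero_orthogonal b' n
  have hx : 0 < ‖x‖ ^ 2 := by positivity
  refine le_of_mul_le_mul_right ?_ hx
  calc f n * ‖x‖ ^ 2 ≤ RCLike.re ⟪x, T x⟫_𝕜 := b.mul_norm_sq_le_re_inner_apply_self hT hf hxb
    _ ≤ RCLike.re ⟪x, T' x⟫_𝕜 := hle x
    _ ≤ g n * ‖x‖ ^ 2 := b'.re_inner_apply_self_le_mul_norm_sq hT' hg hxb'

end Comparison

theorem Fin.eq_of_monotone_of_map_univ_eq {α : Type*} [LinearOrder α] {ν : ℕ}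
    {f g : Fin ν → α} (hf : Monotone f) (hg : Monotone g)
    (h : Finset.univ.val.map f = Finset.univ.val.map g) : f = g := by
  rw [Fin.univ_val_map, Fin.univ_val_map, Multiset.coe_eq_coe] at h
  exact List.ofFn_injective (h.eq_of_sortedLE hf.sortedLE_ofFn hg.sortedLE_ofFn)

namespace Matrix.IsHermitian

variable {𝕜 : Type*} [RCLike 𝕜] {ν : ℕ} {A B : Matrix (Fin ν) (Fin ν) 𝕜}

/-- The eigenvalues of a Hermitian matrix in increasing order (`eigenvalues₀` is antitone). -/
def sortedEigenvalues (hA : A.IsHermitian) : Fin ν → ℝ :=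
  hA.eigenvalues ∘ Tuple.sort hA.eigenvalues

def sortedEigenvectorBasis (hA : A.IsHermitian) :
    OrthonormalBasis (Fin ν) 𝕜 (EuclideanSpace 𝕜 (Fin ν)) :=
  hA.eigenvectorBasis.reindex (Tuple.sort hA.eigenvalues).symm

theorem monotone_sortedEigenvalues (hA : A.IsHermitian) : Monotone hA.sortedEigenvalues :=
  Tuple.monotone_sort _

theorem toEuclideanLin_sortedEigenvectorBasis (hA : A.IsHermitian) (i : Fin ν) :
    toEuclideanLin A (hA.sortedEigenvectorBasis i)
      = (hA.sortedEigenvalues i : 𝕜) • hA.sortedEigenvectorBasis i := by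
  have h := hA.mulVec_eigenvectorBasis (Tuple.sort hA.eigenvalues i)
  rw [RCLike.real_smul_eq_coe_smul (K := 𝕜)] at h
  rw [sortedEigenvectorBasis, OrthonormalBasis.reindex_apply, Equiv.symm_symm]
  exact WithLp.ofLp_injective 2 h

theorem map_univ_sortedEigenvalues (hA : A.IsHermitian) :
    Finset.univ.val.map hA.sortedEigenvalues = Finset.univ.val.map hA.eigenvalues := by
  rw [sortedEigenvalues, ← Multiset.map_map, Multiset.map_univ_val_equiv]

theorem re_trace_eq_sum_sortedEigenvalues (hA : A.IsHermitian) :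
    RCLike.re A.trace = ∑ i, hA.sortedEigenvalues i := by
  rw [hA.trace_eq_sum_eigenvalues, map_sum]
  simp only [RCLike.ofReal_re]
  exact (Equiv.sum_comp _ _).symm

theorem sortedEigenvalues_eq_of_charpoly_eq (hA : A.IsHermitian) {f : Fin ν → ℝ}
    (hf : Monotone f) (h : A.charpoly = ∏ i, (X - C (f i : 𝕜))) :
    hA.sortedEigenvalues = f := by
  refine Fin.eq_of_monotone_of_map_univ_eq hA.monotone_sortedEigenvalues hf ?_
  have hroots := congrArg roots h
  rw [hA.roots_charpoly_eq_eigenvalues, roots_prod _ _ (by simp [Finset.prod_ne_zero_iff,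
    X_sub_C_ne_zero])] at hroots
  simp only [roots_X_sub_C, Multiset.bind_singleton] at hroots
  rw [map_univ_sortedEigenvalues]
  refine Multiset.map_injective (RCLike.ofReal_injective (K := 𝕜)) ?_
  rw [Multiset.map_map, Multiset.map_map, hroots]
  rfl

theorem sortedEigenvalues_le_of_re_dotProduct_le (hA : A.IsHermitian) (hB : B.IsHermitian)
    (hle : ∀ x, RCLike.re (star x ⬝ᵥ (A *ᵥ x)) ≤ RCLike.re (star x ⬝ᵥ (B *ᵥ x)))
    (n : Fin ν) : hA.sortedEigenvalues n ≤ hB.sortedEigenvalues n :=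
  hA.sortedEigenvectorBasis.le_of_re_inner_apply_self_le hB.sortedEigenvectorBasis
    hA.toEuclideanLin_sortedEigenvectorBasis hB.toEuclideanLin_sortedEigenvectorBasis
    hA.monotone_sortedEigenvalues hB.monotone_sortedEigenvalues
    (fun x => by simpa [EuclideanSpace.inner_eq_star_dotProduct, dotProduct_comm] using hle x) n

variable {D P : Matrix (Fin ν) (Fin ν) 𝕜}

theorem sortedEigenvalues_sub_mem_Icc (hA : A.IsHermitian) (hP : P.IsHermitian)
    (hD : D.IsHermitian)
    (h : ∀ x, |RCLike.re (star x ⬝ᵥ (P *ᵥ x))| ≤ RCLike.re (star x ⬝ᵥ (D *ᵥ x))) (n : Fin ν) :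
    (hA.sub hP).sortedEigenvalues n
      ∈ Set.Icc ((hA.sub hD).sortedEigenvalues n) ((hA.add hD).sortedEigenvalues n) := by
  constructor <;> refine sortedEigenvalues_le_of_re_dotProduct_le _ _ (fun x => ?_) n <;>
  · have hx := abs_le.mp (h x)
    simp only [sub_mulVec, add_mulVec, dotProduct_sub, dotProduct_add, map_sub, map_add]
    linarith [hx.1, hx.2]

theorem sum_sortedEigenvalues_add_sub_sub (hA : A.IsHermitian) (hD : D.IsHermitian) :
    ∑ n, ((hA.add hD).sortedEigenvalues n - (hA.sub hD).sortedEigenvalues n)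
      = 2 * RCLike.re D.trace := by
  rw [Finset.sum_sub_distrib, ← re_trace_eq_sum_sortedEigenvalues,
    ← re_trace_eq_sum_sortedEigenvalues, trace_add, trace_sub, map_add, map_sub]
  ring

end Matrix.IsHermitian

theorem Matrix.star_dotProduct_sum_single_mulVec {ι n R : Type*} [Fintype n] [DecidableEq n]
    [CommSemiring R] [StarRing R] (s : Finset ι) (i j : ι → n) (c : ι → R) (x : n → R) :
    star x ⬝ᵥ ((∑ e ∈ s, single (i e) (j e) (c e)) *ᵥ x)
      = ∑ e ∈ s, star (x (i e)) * c e * x (j e) := by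
  simp only [sum_mulVec, dotProduct_sum, single_mulVec_eq, dotProduct_smul, dotProduct_single,
    Pi.star_apply, smul_eq_mul, mul_one]
  exact Finset.sum_congr rfl fun e _ => by ring

theorem Function.Involutive.mem_union_image_iff {E : Type*} [DecidableEq E] {inv : E → E}
    (hinv : Function.Involutive inv) {S : Finset E} {e : E} :
    e ∈ S ∪ S.image inv ↔ e ∈ S ∨ inv e ∈ S := by
  rw [Finset.mem_union, Finset.mem_image]
  refine or_congr_right ⟨?_, fun h => ⟨inv e, h, hinv e⟩⟩
  rintro ⟨a, ha, rfl⟩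
  rwa [hinv]

section GraphMatrices

variable {E : Type*} {d ν : ℕ} (o t : E → Fin ν) (τ : E → Fin d → ℤ) (α : E → ℝ)
  (mV : Fin ν → ℝ) (mA : E → ℝ)

def edgeWeight (e : E) : ℝ :=
  mA e / Real.sqrt (mV (o e) * mV (t e))

def hoppingMatrix (F : Finset E) (θ : Fin d → ℝ) : Matrix (Fin ν) (Fin ν) ℂ :=
  ∑ e ∈ F, single (o e) (t e)
    ((edgeWeight o t mV mA e : ℂ) * Complex.exp (Complex.I * edgePhase α τ θ e))

def degreeMatrix (F : Finset E) : Matrix (Fin ν) (Fin ν) ℂ :=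
  ∑ e ∈ F, single (o e) (o e) (edgeWeight o t mV mA e : ℂ)

theorem wFiberLap_eq_sub_hoppingMatrix [Fintype E] (θ : Fin d → ℝ) :
    wFiberLap o t τ α mV mA θ
      = diagonal (fun v => (wDeg o mV mA v : ℂ)) - hoppingMatrix o t τ α mV mA Finset.univ θ := by
  ext v u
  simp only [wFiberLap, hoppingMatrix, edgeWeight, Matrix.sub_apply, diagonal_apply,
    Matrix.sum_apply, single_apply, mul_ite, mul_one, mul_zero]
  rw [← Finset.sum_filter]
  refine congrArg _ (Finset.sum_congr rfl fun e he => ?_)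
  obtain ⟨rfl, rfl⟩ := (Finset.mem_filter.mp he).2
  rfl

theorem trace_degreeMatrix (F : Finset E) :
    (degreeMatrix o t mV mA F).trace = ∑ e ∈ F, (edgeWeight o t mV mA e : ℂ) := by
  simp [degreeMatrix, trace_sum]

theorem isHermitian_degreeMatrix (F : Finset E) : (degreeMatrix o t mV mA F).IsHermitian := by
  simp [IsHermitian, degreeMatrix, conjTranspose_sum, conjTranspose_single]

variable {o t τ α mV mA}

theorem hoppingMatrix_congr_of_phase {F : Finset E} {θ θ' : Fin d → ℝ}
    (h : ∀ e ∈ F, edgePhase α τ θ e = edgePhase α τ θ' e) :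
    hoppingMatrix o t τ α mV mA F θ = hoppingMatrix o t τ α mV mA F θ' :=
  Finset.sum_congr rfl fun e he => by rw [h e he]

section Involution

variable {inv : E → E} (hinv : Function.Involutive inv)
  (ho : ∀ e, o (inv e) = t e) (ht : ∀ e, t (inv e) = o e) (hmAinv : ∀ e, mA (inv e) = mA e)
include ho ht hmAinv

theorem edgeWeight_inv (e : E) : edgeWeight o t mV mA (inv e) = edgeWeight o t mV mA e := by
  rw [edgeWeight, edgeWeight, hmAinv, ho, ht, mul_comm]

include hinv in
theorem sum_edgeWeight_mul_comp_t {F : Finset E} (hF : ∀ e ∈ F, inv e ∈ F) (g : Fin ν → ℝ) :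
    ∑ e ∈ F, edgeWeight o t mV mA e * g (t e) = ∑ e ∈ F, edgeWeight o t mV mA e * g (o e) :=
  Finset.sum_nbij' inv inv hF hF (fun e _ => hinv e) (fun e _ => hinv e)
    fun e _ => by rw [edgeWeight_inv ho ht hmAinv, ho]

omit ho ht hmAinv in
theorem edgePhase_inv (hτ : ∀ e, τ (inv e) = -τ e) (hα : ∀ e, α (inv e) = -α e)
    (θ : Fin d → ℝ) (e : E) : edgePhase α τ θ (inv e) = -edgePhase α τ θ e := by
  simp [edgePhase, hα, hτ]
  ring

include hinv in
theorem isHermitian_hoppingMatrix (hτ : ∀ e, τ (inv e) = -τ e) (hα : ∀ e, α (inv e) = -α e)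
    {F : Finset E} (hF : ∀ e ∈ F, inv e ∈ F) (θ : Fin d → ℝ) :
    (hoppingMatrix o t τ α mV mA F θ).IsHermitian := by
  rw [IsHermitian, hoppingMatrix, conjTranspose_sum]
  refine Finset.sum_nbij' inv inv hF hF (fun e _ => hinv e) (fun e _ => hinv e) fun e _ => ?_
  rw [conjTranspose_single, ho, ht, edgeWeight_inv ho ht hmAinv, edgePhase_inv hτ hα,
    star_mul', Complex.star_def, ← Complex.exp_conj]
  simp [Complex.conj_ofReal]

include hinv in
theorem abs_re_star_dotProduct_hoppingMatrix_le (hmA : ∀ e, 0 ≤ mA e) {F : Finset E}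
    (hF : ∀ e ∈ F, inv e ∈ F) (θ : Fin d → ℝ) (x : Fin ν → ℂ) :
    |(star x ⬝ᵥ (hoppingMatrix o t τ α mV mA F θ *ᵥ x)).re|
      ≤ (star x ⬝ᵥ (degreeMatrix o t mV mA F *ᵥ x)).re := by
  have hw : ∀ e, 0 ≤ edgeWeight o t mV mA e := fun e => div_nonneg (hmA e) (Real.sqrt_nonneg _)
  rw [hoppingMatrix, degreeMatrix, star_dotProduct_sum_single_mulVec,
    star_dotProduct_sum_single_mulVec]
  calc _ ≤ ∑ e ∈ F, ‖star (x (o e)) * ((edgeWeight o t mV mA e : ℂ)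
          * Complex.exp (Complex.I * edgePhase α τ θ e)) * x (t e)‖ :=
        (Complex.abs_re_le_norm _).trans (norm_sum_le _ _)
    _ = ∑ e ∈ F, edgeWeight o t mV mA e * (‖x (o e)‖ * ‖x (t e)‖) := by
        refine Finset.sum_congr rfl fun e _ => ?_
        rw [norm_mul, norm_mul, norm_mul, norm_star, Complex.norm_exp_I_mul_ofReal,
          Complex.norm_real, Real.norm_of_nonneg (hw e)]
        ring
    _ ≤ ∑ e ∈ F, edgeWeight o t mV mA e * ((‖x (o e)‖ ^ 2 + ‖x (t e)‖ ^ 2) / 2) := by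
        refine Finset.sum_le_sum fun e _ => mul_le_mul_of_nonneg_left ?_ (hw e)
        nlinarith [sq_nonneg (‖x (o e)‖ - ‖x (t e)‖)]
    _ = ∑ e ∈ F, edgeWeight o t mV mA e * ‖x (o e)‖ ^ 2 := by
        simp only [mul_div_assoc', mul_add, add_div, Finset.sum_add_distrib,
          ← Finset.sum_div, sum_edgeWeight_mul_comp_t hinv ho ht hmAinv hF (‖x ·‖ ^ 2)]
        ring
    _ = _ := by
        rw [Complex.re_sum]
        refine Finset.sum_congr rfl fun e _ => ?_
        rw [Complex.star_def, mul_right_comm, Complex.conj_mul', ← Complex.ofReal_pow,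
          ← Complex.ofReal_mul, Complex.ofReal_re, mul_comm]

include hinv in
theorem isHermitian_wFiberLap [Fintype E] (hτ : ∀ e, τ (inv e) = -τ e)
    (hα : ∀ e, α (inv e) = -α e) (θ : Fin d → ℝ) :
    (wFiberLap o t τ α mV mA θ).IsHermitian := by
  rw [wFiberLap_eq_sub_hoppingMatrix]
  exact (isHermitian_diagonal_iff.mpr fun v => Complex.conj_ofReal _).sub
    (isHermitian_hoppingMatrix hinv ho ht hmAinv hτ hα (fun e _ => Finset.mem_univ _) θ)

end Involution

theorem wFiberLap_add_hoppingMatrix_eq [Fintype E] [DecidableEq E] {F : Finset E}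
    (hF : ∀ e ∉ F, α e = 0 ∧ τ e = 0) (θ θ' : Fin d → ℝ) :
    wFiberLap o t τ α mV mA θ + hoppingMatrix o t τ α mV mA F θ
      = wFiberLap o t τ α mV mA θ' + hoppingMatrix o t τ α mV mA F θ' := by
  have hsplit : ∀ θ, hoppingMatrix o t τ α mV mA Finset.univ θ
      = hoppingMatrix o t τ α mV mA Fᶜ θ + hoppingMatrix o t τ α mV mA F θ :=
    fun θ => (Finset.sum_compl_add_sum F _).symm
  have hcompl : hoppingMatrix o t τ α mV mA Fᶜ θ = hoppingMatrix o t τ α mV mA Fᶜ θ' :=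
    hoppingMatrix_congr_of_phase fun e he => by
      simp [edgePhase, hF e (Finset.mem_compl.mp he)]
  rw [wFiberLap_eq_sub_hoppingMatrix, wFiberLap_eq_sub_hoppingMatrix, hsplit, hsplit, hcompl]
  abel

end GraphMatrices

theorem sum_ciSup_sub_ciInf_le {ι Θ : Type*} [Fintype ι] [Nonempty Θ] {f : Θ → ι → ℝ}
    {l u : ι → ℝ} (h : ∀ θ i, f θ i ∈ Set.Icc (l i) (u i)) :
    ∑ i, ((⨆ θ, f θ i) - ⨅ θ, f θ i) ≤ ∑ i, (u i - l i) :=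
  Finset.sum_le_sum fun i _ =>
    sub_le_sub (ciSup_le fun θ => (h θ i).2) (le_ciInf fun θ => (h θ i).1)

theorem ciInf_le_ciSup_of_mem_Icc {Θ : Type*} [Nonempty Θ] {f : Θ → ℝ} {l u : ℝ}
    (h : ∀ θ, f θ ∈ Set.Icc l u) : ⨅ θ, f θ ≤ ⨆ θ, f θ :=
  ciInf_le_ciSup ⟨l, Set.forall_mem_range.mpr fun θ => (h θ).1⟩
    ⟨u, Set.forall_mem_range.mpr fun θ => (h θ).2⟩

theorem Real.volume_iUnion_Icc_le {ι : Type*} [Fintype ι] {a b : ι → ℝ} (h : ∀ i, a i ≤ b i) :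
    MeasureTheory.volume (⋃ i, Set.Icc (a i) (b i)) ≤ ENNReal.ofReal (∑ i, (b i - a i)) := by
  rw [ENNReal.ofReal_sum_of_nonneg fun i _ => sub_nonneg.mpr (h i)]
  refine (MeasureTheory.measure_iUnion_fintype_le _ _).trans_eq ?_
  simp [Real.volume_Icc]

theorem weighted_band_sum_le_two_betti_general
    {d ν : ℕ}
    {E : Type*} [Fintype E] [DecidableEq E]
    (o t : E → Fin ν) (inv : E → E)
    (hinv : ∀ e, inv (inv e) = e)
    (ho : ∀ e, o (inv e) = t e) (ht : ∀ e, t (inv e) = o e)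
    (τ : E → Fin d → ℤ) (hτ : ∀ e, τ (inv e) = - τ e)
    (α : E → ℝ) (hα : ∀ e, α (inv e) = - α e)
    (mV : Fin ν → ℝ)
    (mA : E → ℝ) (hmA : ∀ e, 0 < mA e) (hmAinv : ∀ e, mA (inv e) = mA e)
    (S : Finset E)
    (hout : ∀ e, e ∉ S → inv e ∉ S → α e = 0 ∧ τ e = 0)
    (Q : Fin ν → ℝ)
    -- `lam θ` enumerates the eigenvalues of `M(θ) + diag Q` with multiplicity, increasing
    (lam : (Fin d → ℝ) → Fin ν → ℝ)
    (hmono : ∀ θ, Monotone (lam θ))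
    (hroots : ∀ θ, (wFiberLap o t τ α mV mA θ
        + Matrix.diagonal (fun v => (Q v : ℂ))).charpoly
      = ∏ n : Fin ν, (X - C ((lam θ n : ℝ) : ℂ)))
    (betti : ℝ)
    (hbetti : betti = ∑ e ∈ S ∪ S.image inv,
        mA e / Real.sqrt (mV (o e) * mV (t e))) :
    (∑ n : Fin ν,
        ((⨆ θ : Fin d → ℝ, lam θ n) - (⨅ θ : Fin d → ℝ, lam θ n)) ≤ 2 * betti)
    ∧ MeasureTheory.volume
        (⋃ n : Fin ν,
          Set.Icc (⨅ θ : Fin d → ℝ, lam θ n) (⨆ θ : Fin d → ℝ, lam θ n))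
      ≤ ENNReal.ofReal (2 * betti) := by
  classical
  set F := S ∪ S.image inv
  have hF_inv : ∀ e ∈ F, inv e ∈ F := fun e he => by
    rw [Function.Involutive.mem_union_image_iff hinv] at he ⊢
    rw [hinv]
    exact he.symm
  have hF_out : ∀ e ∉ F, α e = 0 ∧ τ e = 0 := fun e he => by
    rw [Function.Involutive.mem_union_image_iff hinv, not_or] at he
    exact hout e he.1 he.2
  set P := hoppingMatrix o t τ α mV mA F
  have hP : ∀ θ, (P θ).IsHermitian := isHermitian_hoppingMatrix hinv ho ht hmAinv hτ hα hF_inv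
  set A₀ := wFiberLap o t τ α mV mA 0 + P 0 + diagonal (fun v => (Q v : ℂ))
  have hA₀ : A₀.IsHermitian := ((isHermitian_wFiberLap hinv ho ht hmAinv hτ hα 0).add (hP 0)).add
    (isHermitian_diagonal_iff.mpr fun v => Complex.conj_ofReal _)
  have hD := isHermitian_degreeMatrix o t mV mA F
  have hband : ∀ θ n, lam θ n ∈ Set.Icc ((hA₀.sub hD).sortedEigenvalues n)
      ((hA₀.add hD).sortedEigenvalues n) := fun θ n => by
    have hdecomp : wFiberLap o t τ α mV mA θ + diagonal (fun v => (Q v : ℂ)) = A₀ - P θ := by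
      rw [eq_sub_iff_add_eq, add_right_comm, wFiberLap_add_hoppingMatrix_eq hF_out θ 0]
    rw [← (hA₀.sub (hP θ)).sortedEigenvalues_eq_of_charpoly_eq (hmono θ) (hdecomp ▸ hroots θ)]
    exact hA₀.sortedEigenvalues_sub_mem_Icc (hP θ) hD
      (abs_re_star_dotProduct_hoppingMatrix_le hinv ho ht hmAinv (fun e => (hmA e).le) hF_inv θ) n
  have hwidth : ∑ n, ((⨆ θ, lam θ n) - ⨅ θ, lam θ n) ≤ 2 * betti := by
    refine (sum_ciSup_sub_ciInf_le hband).trans_eq ?_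
    rw [hA₀.sum_sortedEigenvalues_add_sub_sub hD, trace_degreeMatrix, hbetti]
    simp [edgeWeight]
  exact ⟨hwidth, (Real.volume_iUnion_Icc_le fun n => ciInf_le_ciSup_of_mem_Icc (hband · n)).trans
    (ENNReal.ofReal_le_ofReal hwidth)⟩

theorem weighted_band_sum_le_two_betti
    {d ν : ℕ} (hd : 1 ≤ d) (hν : 1 ≤ ν)
    {E : Type*} [Fintype E] [DecidableEq E]
    (o t : E → Fin ν) (inv : E → E)
    (hinv : ∀ e, inv (inv e) = e) (hfpf : ∀ e, inv e ≠ e)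
    (ho : ∀ e, o (inv e) = t e) (ht : ∀ e, t (inv e) = o e)
    (τ : E → Fin d → ℤ) (hτ : ∀ e, τ (inv e) = - τ e)
    (α : E → ℝ) (hα : ∀ e, α (inv e) = - α e)
    (mV : Fin ν → ℝ) (hmV : ∀ v, 0 < mV v)
    (mA : E → ℝ) (hmA : ∀ e, 0 < mA e) (hmAinv : ∀ e, mA (inv e) = mA e)
    (S : Finset E) (hS : ∀ e ∈ S, inv e ∉ S)
    (hout : ∀ e, e ∉ S → inv e ∉ S → α e = 0 ∧ τ e = 0)
    (Q : Fin ν → ℝ)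
    -- `lam θ` enumerates the eigenvalues of `M(θ) + diag Q` with multiplicity, increasing
    (lam : (Fin d → ℝ) → Fin ν → ℝ)
    (hmono : ∀ θ, Monotone (lam θ))
    (hroots : ∀ θ, (wFiberLap o t τ α mV mA θ
        + Matrix.diagonal (fun v => (Q v : ℂ))).charpoly
      = ∏ n : Fin ν, (X - C ((lam θ n : ℝ) : ℂ)))
    (betti : ℝ)
    (hbetti : betti = ∑ e ∈ S ∪ S.image inv,
        mA e / Real.sqrt (mV (o e) * mV (t e))) :
    (∑ n : Fin ν,
        ((⨆ θ : Fin d → ℝ, lam θ n) - (⨅ θ : Fin d → ℝ, lam θ n)) ≤ 2 * betti)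
    ∧ MeasureTheory.volume
        (⋃ n : Fin ν,
          Set.Icc (⨅ θ : Fin d → ℝ, lam θ n) (⨆ θ : Fin d → ℝ, lam θ n))
      ≤ ENNReal.ofReal (2 * betti) :=
  weighted_band_sum_le_two_betti_general o t inv hinv ho ht τ hτ α hα mV mA hmA hmAinv S hout Q lam
    hmono hroots betti hbetti

end
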